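/- For n ≥ 3, the number c'_{n+1} of ordered ranked trees of size n+1 that are maximally probable at their root and whose 1-2 subtree H(t) equals the whole tree satisfies c'_{n+1} = Σ_{q=1}^{n-1} q!·(n−q)!·2^{min(q,n−q)} = n!·α_n, where α_n = Σ_{q=1}^{n-1} 2^{min(q,n−q)}/C(n,q). -/

import Mathlib

/-- Rooted binary plane trees with a natural-number label at each internal node. -/
inductive OTree where
  | leaf : OTree
  | node : ℕ → OTree → OTree → OTree

/-- Multiset of internal-node labels. -/
def iLabels : OTree → Multiset ℕ
  | .leaf => 0
  | .node k a b => k ::ₘ (iLabels a + iLabels b)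

/-- Size of a tree: its number of internal nodes. -/
def size (t : OTree) : ℕ := (iLabels t).card

/-- Internal labels increase along every root-to-leaf path. -/
def Increasing : OTree → Prop
  | .leaf => True
  | .node k a b => (∀ j ∈ iLabels a + iLabels b, k < j) ∧ Increasing a ∧ Increasing b

/-- An ordered ranked tree of size `n`: internal nodes bijectively labeled
`1,…,n`, increasingly from the root toward the leaves. -/
def IsOrderedRankedTree (n : ℕ) (t : OTree) : Prop :=
  iLabels t = (Finset.Icc 1 n).val ∧ Increasing t

/-- The time-ordered word of coalescences of the two subtrees `L`, `R`:
all internal labels of `L` and `R` sorted increasingly, with each entry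
recorded as `true` if it is an event of `L` and `false` if of `R`. -/
def word (L R : OTree) : List Bool :=
  ((iLabels L + iLabels R).sort (· ≤ ·)).map fun x => decide (x ∈ iLabels L)

/-- The word `w` (with `m ≥ q`) has the form `ℓ^{m-q}{ℓr, rℓ}^q`:
the first `m - q` events are in `L`, then `q` pairs of events follow,
each pair having one event in `L` and one in `R`, in either order. -/
def IsMPWord (m q : ℕ) (w : List Bool) : Prop :=
  (∀ i < m - q, w.getD i false = true) ∧
  ∀ j < q, w.getD (m - q + 2 * j) false ≠ w.getD (m - q + 2 * j + 1) false

/-- The pair of subtrees `a`, `b` of a node makes it maximally probable: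
for some naming of the two subtrees as `L`, `R` with `|L| ≥ |R|`, the sequence
of coalescences has the form `ℓ^{m-q}{ℓr, rℓ}^q`. -/
def MPPair (a b : OTree) : Prop :=
  (size b ≤ size a ∧ IsMPWord (size a) (size b) (word a b)) ∨
  (size a ≤ size b ∧ IsMPWord (size b) (size a) (word b a))

/-- The root of `t` generates a maximally probable subtree. -/
def MPRoot : OTree → Prop
  | .leaf => False
  | .node _ a b => MPPair a b

/-- The root of `t` satisfies the 1-2 condition (one subtree of size at least 1,
the other of size at least 2), i.e. `H(t) = t`. -/
def OneTwoRoot : OTree → Prop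
  | .leaf => False
  | .node _ a b => (1 ≤ size a ∧ 2 ≤ size b) ∨ (2 ≤ size a ∧ 1 ≤ size b)

noncomputable def alpha (n : ℕ) : ℝ :=
  ∑ q ∈ Finset.Icc 1 (n - 1), (2 : ℝ) ^ (min q (n - q)) / (Nat.choose n q : ℝ)

/-!
The root of a ranked tree of size `n + 1` is labelled `1`, and the tree amounts to the label set
`A ⊆ {2, …, n + 1}` of its left subtree together with an increasing tree on `A` and one on the
complement; there are `|A|! (n - |A|)!` such pairs. Both root conditions depend on `A` only: the
1-2 condition says `1 ≤ |A| ≤ n - 1` (as `n ≥ 3`), and maximal probability says that the membership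
word of `A` along `2, …, n + 1`, or that of its complement, is `ℓ^{m-q}{ℓr, rℓ}^q`. Such a label
set is determined by the order chosen inside each of its `q = min(|A|, n - |A|)` pairs, so
`2 ^ min(|A|, n - |A|)` sets of each size qualify.
-/

open Finset
open scoped Nat

namespace Finset

variable {α : Type*}

theorem notMem_of_forall_lt [Preorder α] {k : α} {T : Finset α}
    (hk : ∀ x ∈ T, k < x) : k ∉ T :=
  fun h => (hk k h).false

theorem Nonempty.exists_eq_insert_lt [LinearOrder α] {S : Finset α}
    (hS : S.Nonempty) : ∃ k T, (∀ x ∈ T, k < x) ∧ S = insert k T :=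
  ⟨_, _, fun _ => S.min'_lt_of_mem_erase_min' hS, (insert_erase (S.min'_mem hS)).symm⟩

theorem sum_powerset_factorial_mul_factorial (T : Finset α) :
    ∑ A ∈ T.powerset, (#A)! * (#T - #A)! = (#T + 1)! := by
  have hterm : ∀ j ∈ range (#T + 1), (#T).choose j • (j ! * (#T - j)!) = (#T)! := fun j hj => by
    rw [smul_eq_mul, ← mul_assoc,
      Nat.choose_mul_factorial_mul_factorial (Nat.lt_succ_iff.1 (mem_range.1 hj))]
  rw [sum_powerset_apply_card (fun j => j ! * (#T - j)!), sum_congr rfl hterm, sum_const,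
    card_range, smul_eq_mul, Nat.factorial_succ]

theorem sum_powerset_filter_card_mem {M : Type*} [AddCommMonoid M] (s : Finset α)
    (K : Finset ℕ) (P : Finset α → Prop) [DecidablePred P] (f : ℕ → M) :
    ∑ A ∈ s.powerset with #A ∈ K ∧ P A, f #A =
      ∑ p ∈ K, #((powersetCard p s).filter P) • f p := by
  rw [← sum_fiberwise_of_maps_to (g := card) (t := K) fun A hA => (mem_filter.1 hA).2.1]
  refine sum_congr rfl fun p hp => ?_
  rw [sum_congr rfl fun A hA => by rw [(mem_filter.1 hA).2], sum_const]
  congr 2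
  ext A
  simp only [mem_filter, mem_powerset, mem_powersetCard]
  grind

variable [DecidableEq α]

theorem val_add_val_sdiff {A T : Finset α} (h : A ⊆ T) : A.val + (T \ A).val = T.val := by
  rw [sdiff_val, add_tsub_cancel_of_le (val_le_iff.2 h)]

theorem exists_subset_of_add_eq_val {u v : Multiset α} {T : Finset α} (h : u + v = T.val) :
    ∃ A ⊆ T, u = A.val ∧ v = (T \ A).val := by
  have hle : u ≤ T.val := h ▸ Multiset.le_add_right u v
  refine ⟨⟨u, Multiset.nodup_of_le hle T.nodup⟩, val_le_iff.1 hle, rfl, ?_⟩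
  rw [sdiff_val]
  exact eq_tsub_of_add_eq ((add_comm v u).trans h)

end Finset

theorem Nat.sort_Icc (a b : ℕ) : (Icc a b).val.sort (· ≤ ·) = List.range' a (b + 1 - a) := by
  rw [Nat.Icc_eq_range']
  exact List.mergeSort_eq_self _ List.pairwise_le_range'

namespace OTree

abbrev IncTree (S : Finset ℕ) : Type := {t : OTree // iLabels t = S.val ∧ Increasing t}

theorem size_eq_card {t : OTree} {A : Finset ℕ} (h : iLabels t = A.val) : size t = #A := by
  rw [size, h, card_val]

theorem eq_leaf_of_iLabels_eq_zero : ∀ {t : OTree}, iLabels t = 0 → t = leaf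
  | .leaf, _ => rfl
  | .node _ _ _, h => absurd h Multiset.cons_ne_zero

instance : Unique (IncTree ∅) where
  default := ⟨leaf, rfl, trivial⟩
  uniq t := Subtype.ext (eq_leaf_of_iLabels_eq_zero t.2.1)

section Graft

variable {k : ℕ} {T : Finset ℕ}

def graft (hk : ∀ x ∈ T, k < x) :
    (Σ A : T.powerset, IncTree A × IncTree (T \ A)) → IncTree (insert k T) :=
  fun ⟨⟨A, hA⟩, ⟨a, ha, ha'⟩, ⟨b, hb, hb'⟩⟩ =>
    have hab : iLabels a + iLabels b = T.val := by
      rw [ha, hb, val_add_val_sdiff (mem_powerset.1 hA)]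
    ⟨.node k a b, by rw [iLabels, hab, insert_val_of_notMem (notMem_of_forall_lt hk)],
      fun j hj => hk j (hab ▸ hj :), ha', hb'⟩

theorem graft_injective (hk : ∀ x ∈ T, k < x) : Function.Injective (graft hk) := by
  rintro ⟨⟨A, _⟩, ⟨a, ha, _⟩, ⟨b, _, _⟩⟩ ⟨⟨A', _⟩, ⟨a', ha', _⟩, ⟨b', _, _⟩⟩ h
  obtain ⟨-, rfl, rfl⟩ := OTree.node.inj (congrArg Subtype.val h)
  obtain rfl : A = A' := val_inj.1 (ha ▸ ha')
  rfl

theorem graft_surjective (hk : ∀ x ∈ T, k < x) : Function.Surjective (graft hk) := by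
  rintro ⟨_ | ⟨j, a, b⟩, ht, hinc⟩
  · simp [iLabels, insert_val_of_notMem (notMem_of_forall_lt hk)] at ht
  rw [iLabels, insert_val_of_notMem (notMem_of_forall_lt hk)] at ht
  obtain rfl : j = k := by
    have hk' : k ∈ j ::ₘ (iLabels a + iLabels b) := ht ▸ Multiset.mem_cons_self k _
    have hj : j ∈ k ::ₘ T.val := ht ▸ Multiset.mem_cons_self j _
    rcases Multiset.mem_cons.1 hk' with h | h
    · exact h.symm
    rcases Multiset.mem_cons.1 hj with h' | h'
    · exact h'
    · exact absurd (hinc.1 k h) (hk j h').asymm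
  obtain ⟨A, hAT, ha, hb⟩ := exists_subset_of_add_eq_val ((Multiset.cons_inj_right j).1 ht)
  exact ⟨⟨⟨A, mem_powerset.2 hAT⟩, ⟨a, ha, hinc.2.1⟩, ⟨b, hb, hinc.2.2⟩⟩, rfl⟩

theorem graft_bijective (hk : ∀ x ∈ T, k < x) : Function.Bijective (graft hk) :=
  ⟨graft_injective hk, graft_surjective hk⟩

end Graft

instance incTree_finite (S : Finset ℕ) : Finite (IncTree S) := by
  induction S using strongInduction with | _ S ih
  rcases S.eq_empty_or_nonempty with rfl | hS
  · infer_instance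
  obtain ⟨k, T, hk, rfl⟩ := hS.exists_eq_insert_lt
  have hsub : ∀ A ⊆ T, A ⊂ insert k T := fun A hA =>
    hA.trans_ssubset (ssubset_insert (notMem_of_forall_lt hk))
  have (A : T.powerset) : Finite (IncTree A × IncTree (T \ A)) := by
    have := ih _ (hsub _ (mem_powerset.1 A.2))
    have := ih (T \ A) (hsub _ sdiff_subset)
    infer_instance
  exact Finite.of_surjective _ (graft_surjective hk)

theorem card_subtype_incTree {k : ℕ} {T : Finset ℕ} (hk : ∀ x ∈ T, k < x) (P : OTree → Prop)
    (Q : Finset ℕ → Prop) [DecidablePred Q]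
    (hPQ : ∀ A ⊆ T, ∀ a b, iLabels a = A.val → iLabels b = (T \ A).val →
      (P (.node k a b) ↔ Q A)) :
    Nat.card {t : IncTree (insert k T) // P t.1} =
      ∑ A ∈ T.powerset with Q A, Nat.card (IncTree A) * Nat.card (IncTree (T \ A)) := by
  have hgraft (x : Σ A : T.powerset, IncTree A × IncTree (T \ A)) :
      Q x.1 ↔ P (graft hk x).1 := by
    obtain ⟨⟨A, hA⟩, ⟨a, ha, -⟩, ⟨b, hb, -⟩⟩ := x
    exact (hPQ A (mem_powerset.1 hA) a b ha hb).symm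
  calc Nat.card {t : IncTree (insert k T) // P t.1}
      = Nat.card {x : Σ A : T.powerset, IncTree A × IncTree (T \ A) // Q x.1} :=
        Nat.card_congr ((Equiv.ofBijective _ (graft_bijective hk)).subtypeEquiv hgraft).symm
    _ = Nat.card (Σ A : {A : T.powerset // Q A}, IncTree A × IncTree (T \ A)) :=
        Nat.card_congr (Equiv.subtypeSigmaEquiv _ fun A : T.powerset => Q A)
    _ = ∑ A : {A : T.powerset // Q A}, Nat.card (IncTree A) * Nat.card (IncTree (T \ A)) := by
        simp only [Nat.card_sigma, Nat.card_prod]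
    _ = _ := by
        rw [sum_filter, ← sum_coe_sort T.powerset, ← sum_filter,
          sum_subtype (p := fun A : T.powerset => Q A) _ fun A => by simp]

theorem card_incTree (S : Finset ℕ) : Nat.card (IncTree S) = (#S)! := by
  induction S using strongInduction with | _ S ih
  rcases S.eq_empty_or_nonempty with rfl | hS
  · simp
  obtain ⟨k, T, hk, rfl⟩ := hS.exists_eq_insert_lt
  have hkT := notMem_of_forall_lt hk
  have hsub : ∀ A ⊆ T, A ⊂ insert k T := fun A hA => hA.trans_ssubset (ssubset_insert hkT)
  rw [← Nat.card_congr (Equiv.subtypeUnivEquiv fun _ => trivial),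
    card_subtype_incTree hk (fun _ => True) (fun _ => True) fun _ _ _ _ _ _ => Iff.rfl,
    filter_true, card_insert_of_notMem hkT, ← sum_powerset_factorial_mul_factorial]
  refine sum_congr rfl fun A hA => ?_
  rw [ih A (hsub A (mem_powerset.1 hA)), ih _ (hsub _ sdiff_subset),
    card_sdiff_of_subset (mem_powerset.1 hA)]

end OTree

def memWord (n : ℕ) (A : Finset ℕ) : List Bool :=
  (List.range' 2 n).map fun x => decide (x ∈ A)

theorem card_Icc_two_sdiff {n : ℕ} {A : Finset ℕ} (hA : A ⊆ Icc 2 (n + 1)) :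
    #(Icc 2 (n + 1) \ A) = n - #A := by
  rw [card_sdiff_of_subset hA, Nat.card_Icc, show n + 1 + 1 - 2 = n by omega]

theorem word_eq_memWord {n : ℕ} {A : Finset ℕ} {a b : OTree} (hA : A ⊆ Icc 2 (n + 1))
    (ha : iLabels a = A.val) (hb : iLabels b = (Icc 2 (n + 1) \ A).val) :
    word a b = memWord n A := by
  rw [word, ha, hb, val_add_val_sdiff hA, Nat.sort_Icc, show n + 1 + 1 - 2 = n by omega, memWord]
  rfl

theorem getD_memWord {n i : ℕ} (A : Finset ℕ) (hi : i < n) :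
    (memWord n A).getD i false = decide (i + 2 ∈ A) := by
  simp [memWord, hi, add_comm]

/-- The label sets whose membership word along `2, …, d + 2 q + 1` is `ℓ^d {ℓr, rℓ}^q`. -/
def IsMPSet (d q : ℕ) (W : Finset ℕ) : Prop :=
  (∀ i < d, i + 2 ∈ W) ∧ ∀ j < q, (d + 2 * j + 2 ∈ W ↔ d + 2 * j + 3 ∉ W)

instance (d q : ℕ) : DecidablePred (IsMPSet d q) := fun _ => by unfold IsMPSet; infer_instance

theorem isMPWord_memWord_iff (d q : ℕ) (W : Finset ℕ) :
    IsMPWord (d + q) q (memWord (d + 2 * q) W) ↔ IsMPSet d q W := by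
  unfold IsMPWord IsMPSet
  rw [Nat.add_sub_cancel]
  refine and_congr (forall₂_congr fun i hi => ?_) (forall₂_congr fun j hj => ?_)
  · rw [getD_memWord _ (by omega), decide_eq_true_iff]
  · rw [getD_memWord _ (by omega), getD_memWord _ (by omega), Ne, decide_eq_decide,
      show d + 2 * j + 1 + 2 = d + 2 * j + 3 by ring]
    tauto

theorem isMPSet_of_isMPSet_sdiff {q : ℕ} {A : Finset ℕ}
    (h : IsMPSet 0 q (Icc 2 (2 * q + 1) \ A)) : IsMPSet 0 q A := by
  refine ⟨fun i hi => absurd hi (Nat.not_lt_zero i), fun j hj => ?_⟩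
  have := h.2 j hj
  simp only [mem_sdiff, mem_Icc] at this
  grind

def mpSet (d q : ℕ) (ε : Fin q → Bool) : Finset ℕ :=
  Icc 2 (d + 1) ∪ univ.image fun j : Fin q => if ε j then d + 2 * j + 2 else d + 2 * j + 3

theorem mem_mpSet {d q x : ℕ} {ε : Fin q → Bool} : x ∈ mpSet d q ε ↔
    2 ≤ x ∧ x ≤ d + 1 ∨ ∃ j : Fin q, (if ε j then d + 2 * j + 2 else d + 2 * j + 3) = x := by
  simp [mpSet]

theorem mem_mpSet_pair {d q : ℕ} (ε : Fin q → Bool) (j : Fin q) :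
    (d + 2 * j + 2 ∈ mpSet d q ε ↔ ε j) ∧ (d + 2 * j + 3 ∈ mpSet d q ε ↔ ¬ε j) := by
  have hpair (j' : Fin q) (r : ℕ) (hr : r < 2)
      (h : (if ε j' then d + 2 * j' + 2 else d + 2 * j' + 3) = d + 2 * j + 2 + r) :
      j' = j ∧ (ε j' ↔ r = 0) := by
    split_ifs at h with hε <;> exact ⟨Fin.ext (by omega), by simp [hε]; omega⟩
  simp only [mem_mpSet]
  refine ⟨⟨?_, fun hε => Or.inr ⟨j, by simp [hε]⟩⟩, ⟨?_, fun hε => Or.inr ⟨j, by simp [hε]⟩⟩⟩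
  · rintro (h | ⟨j', h⟩)
    · omega
    · obtain ⟨rfl, hε⟩ := hpair j' 0 (by omega) h
      exact hε.2 rfl
  · rintro (h | ⟨j', h⟩)
    · omega
    · obtain ⟨rfl, hε⟩ := hpair j' 1 (by omega) h
      exact fun h => absurd (hε.1 h) one_ne_zero

theorem mpSet_subset_Icc (d q : ℕ) (ε : Fin q → Bool) :
    mpSet d q ε ⊆ Icc 2 (d + 2 * q + 1) := by
  intro x hx
  rw [mem_Icc]
  rcases mem_mpSet.1 hx with h | ⟨j, rfl⟩
  · omega
  · have := j.2
    split_ifs <;> omega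

theorem card_mpSet (d q : ℕ) (ε : Fin q → Bool) : #(mpSet d q ε) = d + q := by
  have hinj : Function.Injective fun j : Fin q => if ε j then d + 2 * j + 2 else d + 2 * j + 3 :=
    fun j j' h => Fin.ext <| by dsimp only at h; split_ifs at h <;> omega
  rw [mpSet, card_union_of_disjoint, Nat.card_Icc, card_image_of_injective _ hinj, card_univ,
    Fintype.card_fin, show d + 1 + 1 - 2 = d by omega]
  refine disjoint_left.2 fun x hx hx' => ?_
  obtain ⟨j, -, rfl⟩ := mem_image.1 hx'
  rw [mem_Icc] at hx
  split_ifs at hx <;> omega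

theorem isMPSet_mpSet (d q : ℕ) (ε : Fin q → Bool) : IsMPSet d q (mpSet d q ε) := by
  refine ⟨fun i hi => mem_mpSet.2 (Or.inl (by omega)), fun j hj => ?_⟩
  obtain ⟨h₂, h₃⟩ := mem_mpSet_pair (d := d) ε ⟨j, hj⟩
  rw [h₂, h₃, not_not]

theorem mpSet_injective (d q : ℕ) : Function.Injective (mpSet d q) := fun ε ε' h =>
  funext fun j => Bool.eq_iff_iff.2 <| by
    rw [← (mem_mpSet_pair ε j).1, h, (mem_mpSet_pair ε' j).1]

theorem eq_of_isMPSet {d q : ℕ} {W W' : Finset ℕ} (hW : W ⊆ Icc 2 (d + 2 * q + 1))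
    (hW' : W' ⊆ Icc 2 (d + 2 * q + 1)) (h : IsMPSet d q W) (h' : IsMPSet d q W')
    (hpair : ∀ j < q, d + 2 * j + 2 ∈ W ↔ d + 2 * j + 2 ∈ W') : W = W' := by
  suffices ∀ x ∈ Icc 2 (d + 2 * q + 1), x ∈ W ↔ x ∈ W' from
    ext fun x => ⟨fun hx => (this x (hW hx)).1 hx, fun hx => (this x (hW' hx)).2 hx⟩
  intro x hx
  rw [mem_Icc] at hx
  by_cases hlow : x < d + 2
  · obtain ⟨i, hi, rfl⟩ : ∃ i < d, i + 2 = x := ⟨x - 2, by omega, by omega⟩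
    exact iff_of_true (h.1 i hi) (h'.1 i hi)
  obtain ⟨j, hj, rfl | rfl⟩ : ∃ j < q, x = d + 2 * j + 2 ∨ x = d + 2 * j + 3 :=
    ⟨(x - d - 2) / 2, by omega, by omega⟩
  · exact hpair j hj
  · rw [← not_iff_not, ← h.2 j hj, ← h'.2 j hj]
    exact hpair j hj

theorem filter_isMPSet_eq_image (d q : ℕ) :
    (Icc 2 (d + 2 * q + 1)).powerset.filter (IsMPSet d q) = univ.image (mpSet d q) := by
  ext W
  simp only [mem_filter, mem_powerset, mem_image, mem_univ, true_and]
  constructor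
  · rintro ⟨hW, h⟩
    refine ⟨fun j => decide (d + 2 * j + 2 ∈ W), eq_of_isMPSet (mpSet_subset_Icc d q _) hW
      (isMPSet_mpSet d q _) h fun j hj => ?_⟩
    rw [(mem_mpSet_pair _ ⟨j, hj⟩).1, decide_eq_true_iff]
  · rintro ⟨ε, rfl⟩
    exact ⟨mpSet_subset_Icc d q ε, isMPSet_mpSet d q ε⟩

theorem card_filter_isMPSet (d q : ℕ) :
    #((Icc 2 (d + 2 * q + 1)).powerset.filter (IsMPSet d q)) = 2 ^ q := by
  rw [filter_isMPSet_eq_image, card_image_of_injective _ (mpSet_injective d q), card_univ,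
    Fintype.card_fun, Fintype.card_bool, Fintype.card_fin]

theorem card_eq_of_isMPSet {d q : ℕ} {W : Finset ℕ} (hW : W ⊆ Icc 2 (d + 2 * q + 1))
    (h : IsMPSet d q W) : #W = d + q := by
  obtain ⟨ε, -, rfl⟩ := mem_image.1 <|
    filter_isMPSet_eq_image d q ▸ mem_filter.2 ⟨mem_powerset.2 hW, h⟩
  exact card_mpSet d q ε

instance (m q : ℕ) (w : List Bool) : Decidable (IsMPWord m q w) := by
  unfold IsMPWord; infer_instance

/-- `MPPair` for a root whose left subtree carries the labels `A ⊆ {2, …, n + 1}`. -/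
def IsMPSplit (n : ℕ) (A : Finset ℕ) : Prop :=
  (n - #A ≤ #A ∧ IsMPWord #A (n - #A) (memWord n A)) ∨
    (#A ≤ n - #A ∧ IsMPWord (n - #A) #A (memWord n (Icc 2 (n + 1) \ A)))

instance (n : ℕ) : DecidablePred (IsMPSplit n) := fun _ => by unfold IsMPSplit; infer_instance

theorem mpPair_iff_isMPSplit {n : ℕ} {A : Finset ℕ} {a b : OTree} (hA : A ⊆ Icc 2 (n + 1))
    (ha : iLabels a = A.val) (hb : iLabels b = (Icc 2 (n + 1) \ A).val) :
    MPPair a b ↔ IsMPSplit n A := by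
  have ha' : iLabels a = (Icc 2 (n + 1) \ (Icc 2 (n + 1) \ A)).val := by
    rwa [Finset.sdiff_sdiff_eq_self hA]
  rw [MPPair, IsMPSplit, OTree.size_eq_card ha, OTree.size_eq_card hb, card_Icc_two_sdiff hA,
    word_eq_memWord hA ha hb, word_eq_memWord sdiff_subset hb ha']

theorem isMPSplit_sdiff_iff {n : ℕ} {A : Finset ℕ} (hA : A ⊆ Icc 2 (n + 1)) :
    IsMPSplit n (Icc 2 (n + 1) \ A) ↔ IsMPSplit n A := by
  have hAn : #A ≤ n := by simpa using card_le_card hA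
  unfold IsMPSplit
  rw [card_Icc_two_sdiff hA, Finset.sdiff_sdiff_eq_self hA, Nat.sub_sub_self hAn, or_comm]

theorem filter_isMPSplit_eq {n d q : ℕ} (hn : n = d + 2 * q) :
    (powersetCard (d + q) (Icc 2 (n + 1))).filter (IsMPSplit n) =
      (Icc 2 (n + 1)).powerset.filter (IsMPSet d q) := by
  subst hn
  ext A
  simp only [mem_filter, mem_powersetCard, mem_powerset, IsMPSplit]
  constructor
  · rintro ⟨⟨hA, hcard⟩, h | ⟨hle, h⟩⟩
    · rw [hcard, show d + 2 * q - (d + q) = q by omega, isMPWord_memWord_iff] at h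
      exact ⟨hA, h.2⟩
    -- equal sizes: the complement has word `{ℓr, rℓ}^q`, hence so has `A`
    obtain rfl : d = 0 := by omega
    simp only [hcard, zero_add, show 2 * q - q = q by omega] at hA h ⊢
    refine ⟨hA, isMPSet_of_isMPSet_sdiff ((isMPWord_memWord_iff 0 q _).1 ?_)⟩
    simpa using h
  · rintro ⟨hA, h⟩
    have hcard := card_eq_of_isMPSet hA h
    refine ⟨⟨hA, hcard⟩, Or.inl ⟨by omega, ?_⟩⟩
    rwa [hcard, show d + 2 * q - (d + q) = q by omega, isMPWord_memWord_iff]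

theorem card_filter_isMPSplit_of_le {n p : ℕ} (hp : n - p ≤ p) (hpn : p ≤ n) :
    #((powersetCard p (Icc 2 (n + 1))).filter (IsMPSplit n)) = 2 ^ (n - p) := by
  obtain ⟨d, q, rfl, rfl⟩ : ∃ d q, p = d + q ∧ n = d + 2 * q :=
    ⟨2 * p - n, n - p, by omega, by omega⟩
  rw [filter_isMPSplit_eq rfl, card_filter_isMPSet, show d + 2 * q - (d + q) = q by omega]

theorem sdiff_mem_filter_isMPSplit {n p : ℕ} {A : Finset ℕ}
    (hA : A ∈ (powersetCard p (Icc 2 (n + 1))).filter (IsMPSplit n)) :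
    Icc 2 (n + 1) \ A ∈ (powersetCard (n - p) (Icc 2 (n + 1))).filter (IsMPSplit n) := by
  obtain ⟨hAp, h⟩ := mem_filter.1 hA
  obtain ⟨hsub, rfl⟩ := mem_powersetCard.1 hAp
  exact mem_filter.2 ⟨mem_powersetCard.2 ⟨sdiff_subset, card_Icc_two_sdiff hsub⟩,
    (isMPSplit_sdiff_iff hsub).2 h⟩

theorem card_filter_isMPSplit_sdiff {n p : ℕ} (hpn : p ≤ n) :
    #((powersetCard (n - p) (Icc 2 (n + 1))).filter (IsMPSplit n)) =
      #((powersetCard p (Icc 2 (n + 1))).filter (IsMPSplit n)) := by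
  have hinv {r : ℕ} {A : Finset ℕ}
      (hA : A ∈ (powersetCard r (Icc 2 (n + 1))).filter (IsMPSplit n)) :
      Icc 2 (n + 1) \ (Icc 2 (n + 1) \ A) = A :=
    Finset.sdiff_sdiff_eq_self (mem_powersetCard.1 (mem_filter.1 hA).1).1
  refine card_nbij' (Icc 2 (n + 1) \ ·) (Icc 2 (n + 1) \ ·) (fun A hA => ?_)
    (fun A hA => sdiff_mem_filter_isMPSplit hA) (fun A hA => hinv hA) (fun A hA => hinv hA)
  simpa [Nat.sub_sub_self hpn] using sdiff_mem_filter_isMPSplit hA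

theorem card_filter_isMPSplit {n p : ℕ} (hpn : p ≤ n) :
    #((powersetCard p (Icc 2 (n + 1))).filter (IsMPSplit n)) = 2 ^ min p (n - p) := by
  rcases le_total (n - p) p with hp | hp
  · rw [card_filter_isMPSplit_of_le hp hpn, min_eq_right hp]
  · rw [← card_filter_isMPSplit_sdiff hpn, card_filter_isMPSplit_of_le (by omega) (by omega),
      Nat.sub_sub_self hpn, min_eq_left hp]

theorem oneTwoRoot_node_iff {n k : ℕ} (hn : 3 ≤ n) {A : Finset ℕ} {a b : OTree}
    (hA : A ⊆ Icc 2 (n + 1)) (ha : iLabels a = A.val)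
    (hb : iLabels b = (Icc 2 (n + 1) \ A).val) :
    OneTwoRoot (.node k a b) ↔ #A ∈ Icc 1 (n - 1) := by
  have hAn : #A ≤ n := by simpa using card_le_card hA
  rw [OneTwoRoot, OTree.size_eq_card ha, OTree.size_eq_card hb, card_Icc_two_sdiff hA, mem_Icc]
  omega

theorem card_mpRoot_oneTwoRoot {n : ℕ} (hn : 3 ≤ n) :
    Nat.card {t : OTree // IsOrderedRankedTree (n + 1) t ∧ MPRoot t ∧ OneTwoRoot t} =
      ∑ q ∈ Icc 1 (n - 1), q ! * (n - q)! * 2 ^ min q (n - q) := by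
  have hI : insert 1 (Icc 2 (n + 1)) = Icc 1 (n + 1) := insert_Icc_add_one_left_eq_Icc (by omega)
  have hk : ∀ x ∈ Icc 2 (n + 1), 1 < x := fun x hx => (mem_Icc.1 hx).1
  have e : {t : OTree // IsOrderedRankedTree (n + 1) t ∧ MPRoot t ∧ OneTwoRoot t} ≃
      {t : OTree.IncTree (insert 1 (Icc 2 (n + 1))) // MPRoot t.1 ∧ OneTwoRoot t.1} := by
    rw [hI]
    exact (Equiv.subtypeSubtypeEquivSubtypeInter _ _).symm
  rw [Nat.card_congr e]
  refine (OTree.card_subtype_incTree hk (fun t => MPRoot t ∧ OneTwoRoot t)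
    (fun A => #A ∈ Icc 1 (n - 1) ∧ IsMPSplit n A) fun A hA a b ha hb => and_comm.trans
      (and_congr (oneTwoRoot_node_iff hn hA ha hb) (mpPair_iff_isMPSplit hA ha hb))).trans ?_
  rw [sum_congr rfl fun A hA => by
      rw [OTree.card_incTree, OTree.card_incTree,
        card_Icc_two_sdiff (mem_powerset.1 (mem_filter.1 hA).1)],
    sum_powerset_filter_card_mem _ _ _ fun p => p ! * (n - p)!]
  refine sum_congr rfl fun p hp => ?_
  rw [card_filter_isMPSplit (by have := (mem_Icc.1 hp).2; omega), smul_eq_mul, mul_comm]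

theorem factorial_mul_alpha (n : ℕ) :
    (n ! : ℝ) * alpha n =
      ((∑ q ∈ Icc 1 (n - 1), q ! * (n - q)! * 2 ^ min q (n - q) : ℕ) : ℝ) := by
  rw [alpha, mul_sum, Nat.cast_sum]
  refine sum_congr rfl fun q hq => ?_
  have hqn : q ≤ n := by have := (mem_Icc.1 hq).2; omega
  have hchoose : (n.choose q : ℝ) ≠ 0 := by exact_mod_cast (Nat.choose_pos hqn).ne'
  rw [← Nat.choose_mul_factorial_mul_factorial hqn]
  push_cast
  field_simp

theorem count_mp_root_H_eq_t (n : ℕ) (hn : 3 ≤ n) :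
    Nat.card { t : OTree // IsOrderedRankedTree (n + 1) t ∧ MPRoot t ∧ OneTwoRoot t } =
        ∑ q ∈ Finset.Icc 1 (n - 1), q.factorial * (n - q).factorial * 2 ^ (min q (n - q)) ∧
      (Nat.card { t : OTree // IsOrderedRankedTree (n + 1) t ∧ MPRoot t ∧ OneTwoRoot t } : ℝ) =
        (n.factorial : ℝ) * alpha n := by
  have hcard := card_mpRoot_oneTwoRoot hn
  exact ⟨hcard, by rw [hcard, factorial_mul_alpha]⟩
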